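/- arXiv:0907.2639 — 5 statements merged into one kernel-verified Lean document; each statement's English description precedes it below -/
import Mathlib

section
/- Let B be a real matrix with r linearly independent columns b_1, ..., b_r, with Gram-Schmidt orthogonalization b_1^*, ..., b_r^*. Let P = { y in R^r : ℓ ≤ By ≤ w }. Then the width of P along the last unit vector e_r satisfies width(e_r, P) ≤ ‖w − ℓ‖ / ‖b_r^*‖, where width(z,P) = max{⟨z,x⟩ : x ∈ P} − min{⟨z,x⟩ : x ∈ P}. -/
/-- The Gram-Schmidt orthogonalization of a finite family of vectors. -/
noncomputable def gsE {E : Type*} [NormedAddCommGroup E] [InnerProductSpace ℝ E] {r : ℕ}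
    (c : Fin r → E) : Fin r → E :=
  haveI : WellFoundedLT (Fin r) := inferInstance
  InnerProductSpace.gramSchmidt ℝ c

/-- The columns of a real matrix, viewed as vectors in Euclidean space. -/
noncomputable def colsE (m r : ℕ) (B : Matrix (Fin m) (Fin r) ℝ) :
    Fin r → EuclideanSpace ℝ (Fin m) :=
  fun j => (WithLp.equiv 2 (Fin m → ℝ)).symm fun i => B i j

/-!
Pairing with `b_r^*` kills `b_1, …, b_{r-1}` and sends `b_r` to `‖b_r^*‖²`, so
`⟪b_r^*, B y⟫ = y_r ‖b_r^*‖²`. For `y, y' ∈ P` every coordinate of `B (y - y')` is bounded in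
absolute value by the matching coordinate of `w - ℓ`, so Cauchy-Schwarz gives
`(y_r - y'_r) ‖b_r^*‖ ≤ ‖w - ℓ‖`.
-/

open scoped RealInnerProductSpace
open InnerProductSpace

section GramSchmidt

variable {𝕜 E ι : Type*} [RCLike 𝕜] [NormedAddCommGroup E] [InnerProductSpace 𝕜 E]
  [LinearOrder ι] [LocallyFiniteOrderBot ι] [WellFoundedLT ι]

theorem inner_gramSchmidt_self_right (f : ι → E) (i : ι) :
    inner 𝕜 (gramSchmidt 𝕜 f i) (f i) = inner 𝕜 (gramSchmidt 𝕜 f i) (gramSchmidt 𝕜 f i) := by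
  conv_lhs => rw [gramSchmidt_def'' 𝕜 f i]
  rw [inner_add_right, inner_sum, Finset.sum_eq_zero, add_zero]
  intro j hj
  rw [inner_smul_right, gramSchmidt_orthogonal 𝕜 f (Finset.mem_Iio.mp hj).ne', mul_zero]

theorem inner_gramSchmidt_sum_smul_of_isTop [Fintype ι] (f : ι → E) {i : ι} (hi : IsTop i)
    (y : ι → 𝕜) :
    inner 𝕜 (gramSchmidt 𝕜 f i) (∑ j, y j • f j) =
      y i * inner 𝕜 (gramSchmidt 𝕜 f i) (gramSchmidt 𝕜 f i) := by
  rw [inner_sum, Finset.sum_eq_single i, inner_smul_right, inner_gramSchmidt_self_right]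
  · intro j _ hj
    rw [inner_smul_right, gramSchmidt_inv_triangular 𝕜 f ((hi j).lt_of_ne hj), mul_zero]
  · exact fun h => absurd (Finset.mem_univ i) h

end GramSchmidt

theorem mul_norm_gramSchmidt_le_norm_sum_smul {E ι : Type*} [NormedAddCommGroup E]
    [InnerProductSpace ℝ E] [LinearOrder ι] [LocallyFiniteOrderBot ι] [WellFoundedLT ι]
    [Fintype ι] (f : ι → E) {i : ι} (hi : IsTop i) (y : ι → ℝ) :
    y i * ‖gramSchmidt ℝ f i‖ ≤ ‖∑ j, y j • f j‖ := by
  set g := gramSchmidt ℝ f i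
  rcases (norm_nonneg g).eq_or_lt with hg | hg
  · rw [← hg, mul_zero]; exact norm_nonneg _
  refine le_of_mul_le_mul_right ?_ hg
  calc y i * ‖g‖ * ‖g‖ = ⟪g, ∑ j, y j • f j⟫ := by
        rw [inner_gramSchmidt_sum_smul_of_isTop f hi, real_inner_self_eq_norm_sq]; ring
    _ ≤ ‖g‖ * ‖∑ j, y j • f j‖ := real_inner_le_norm _ _
    _ = ‖∑ j, y j • f j‖ * ‖g‖ := mul_comm _ _

theorem EuclideanSpace.norm_le_norm_of_forall_norm_le {𝕜 ι : Type*} [RCLike 𝕜] [Fintype ι]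
    {u v : EuclideanSpace 𝕜 ι} (h : ∀ k, ‖u k‖ ≤ ‖v k‖) : ‖u‖ ≤ ‖v‖ := by
  rw [EuclideanSpace.norm_eq, EuclideanSpace.norm_eq]
  gcongr with k
  exact h k

theorem EuclideanSpace.norm_sub_le_of_forall_mem_Icc {ι : Type*} [Fintype ι]
    {u v ℓ w : EuclideanSpace ℝ ι} (hu : ∀ k, u k ∈ Set.Icc (ℓ k) (w k))
    (hv : ∀ k, v k ∈ Set.Icc (ℓ k) (w k)) : ‖u - v‖ ≤ ‖w - ℓ‖ :=
  norm_le_norm_of_forall_norm_le fun k => by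
    have hwℓ : 0 ≤ w k - ℓ k := sub_nonneg.2 ((hu k).1.trans (hu k).2)
    simpa [Real.norm_eq_abs, ← Real.dist_eq, abs_of_nonneg hwℓ] using
      Real.dist_le_of_mem_Icc (hu k) (hv k)

theorem csSup_sub_csInf_le_of_forall_sub_le {S : Set ℝ} (hS : S.Nonempty) {c : ℝ}
    (h : ∀ a ∈ S, ∀ b ∈ S, a - b ≤ c) : sSup S - sInf S ≤ c := by
  have : ∀ a ∈ S, a - c ≤ sInf S := fun a ha =>
    le_csInf hS fun b hb => by linarith [h a ha b hb]
  linarith [csSup_le hS fun a ha => show a ≤ sInf S + c by linarith [this a ha]]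

theorem toLp_mulVec_eq_sum_colsE {m r : ℕ} (B : Matrix (Fin m) (Fin r) ℝ) (y : Fin r → ℝ) :
    WithLp.toLp 2 (B.mulVec y) = ∑ j, y j • colsE m r B j := by
  ext i
  simp [colsE, Matrix.mulVec, dotProduct, mul_comm]

theorem width_last_le_general (m r : ℕ) (B : Matrix (Fin m) (Fin (r + 1)) ℝ)
    (hB : LinearIndependent ℝ (colsE m (r + 1) B))
    (ℓ w : EuclideanSpace ℝ (Fin m))
    (P : Set (Fin (r + 1) → ℝ))
    (hP : P = {y | ∀ i, ℓ i ≤ B.mulVec y i ∧ B.mulVec y i ≤ w i})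
    (hne : P.Nonempty) :
    sSup ((fun y => y (Fin.last r)) '' P) - sInf ((fun y => y (Fin.last r)) '' P)
      ≤ ‖w - ℓ‖ / ‖gsE (colsE m (r + 1) B) (Fin.last r)‖ := by
  set g := gsE (colsE m (r + 1) B) (Fin.last r)
  have hg : 0 < ‖g‖ := norm_pos_iff.2 (gramSchmidt_ne_zero _ hB)
  subst hP
  refine csSup_sub_csInf_le_of_forall_sub_le (hne.image _) ?_
  rintro _ ⟨y, hy, rfl⟩ _ ⟨y', hy', rfl⟩
  rw [le_div_iff₀ hg]
  calc (y (Fin.last r) - y' (Fin.last r)) * ‖g‖ = (y - y') (Fin.last r) * ‖g‖ := rfl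
    _ ≤ ‖WithLp.toLp 2 (B.mulVec (y - y'))‖ := by
        rw [toLp_mulVec_eq_sum_colsE]
        exact mul_norm_gramSchmidt_le_norm_sum_smul _ (fun _ => Fin.le_last _) _
    _ = ‖WithLp.toLp 2 (B.mulVec y) - WithLp.toLp 2 (B.mulVec y')‖ := by
        rw [Matrix.mulVec_sub]; rfl
    _ ≤ ‖w - ℓ‖ := EuclideanSpace.norm_sub_le_of_forall_mem_Icc hy hy'

/-- the width of `P = {y | ℓ ≤ By ≤ w}` along the last unit vector is at most
`‖w - ℓ‖ / ‖b_r^*‖`, where `b_r^*` is the last Gram-Schmidt vector of the columns of `B`. -/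
theorem width_last_le (m r : ℕ) (B : Matrix (Fin m) (Fin (r + 1)) ℝ)
    (hB : LinearIndependent ℝ (colsE m (r + 1) B))
    (ℓ w : EuclideanSpace ℝ (Fin m))
    (P : Set (Fin (r + 1) → ℝ))
    (hP : P = {y | ∀ i, ℓ i ≤ B.mulVec y i ∧ B.mulVec y i ≤ w i})
    (hne : P.Nonempty)
    (hba : BddAbove ((fun y => y (Fin.last r)) '' P))
    (hbb : BddBelow ((fun y => y (Fin.last r)) '' P)) :
    sSup ((fun y => y (Fin.last r)) '' P) - sInf ((fun y => y (Fin.last r)) '' P)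
      ≤ ‖w - ℓ‖ / ‖gsE (colsE m (r + 1) B) (Fin.last r)‖ :=
  width_last_le_general m r B hB ℓ w P hP hne
end

section
/- Let B be a real m×r matrix with independent columns (r ≤ m), b_1^*, ..., b_r^* the Gram-Schmidt orthogonalization of its columns, and P = { y ∈ R^r : ℓ ≤ By ≤ w }. When reverse branch-and-bound (branching on variables y_r, y_{r-1}, ..., y_1 in that order) is applied to P, the number of nodes at the level of variable y_i is at most ∏_{j=i}^{r} ( ⌊‖w−ℓ‖/‖b_j^*‖⌋ + 1 ). -/
/-!
If two points `y, y'` of `P` agree in the coordinates after `j`, then pairing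
`B (y - y') = ∑_{k ≤ j} (y_k - y'_k) b_k` with `b_j^*`, which is orthogonal to `b_k` for `k < j`
and satisfies `⟪b_j, b_j^*⟫ = ‖b_j^*‖²`, gives `|y_j - y'_j| ‖b_j^*‖ ≤ ‖B (y - y')‖ ≤ ‖w - ℓ‖`
by Cauchy–Schwarz, since `B y` and `B y'` both lie in the box `[ℓ, w]`. So below a fixed node at
the level of `y_{j+1}` the integers `γ_j` of the children span an interval of length at most
`‖w - ℓ‖ / ‖b_j^*‖`, and the bound follows by multiplying over the levels `j = r, …, i`.
-/

theorem Set.finite_and_ncard_le_of_forall_finset_card_le {α : Type*} {S : Set α} {n : ℕ}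
    (h : ∀ t : Finset α, ↑t ⊆ S → t.card ≤ n) : S.Finite ∧ S.ncard ≤ n := by
  have hS : S.Finite := by
    by_contra hinf
    obtain ⟨t, htS, ht⟩ := Set.Infinite.exists_subset_card_eq hinf (n + 1)
    have := h t htS
    omega
  refine ⟨hS, ?_⟩
  rw [Set.ncard_eq_toFinset_card S hS]
  exact h _ (by simp)

theorem Int.card_le_floor_add_one_of_sub_le (T : Finset ℤ) (L : ℝ)
    (h : ∀ a ∈ T, ∀ b ∈ T, ((a - b : ℤ) : ℝ) ≤ L) : T.card ≤ ⌊L⌋₊ + 1 := by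
  rcases T.eq_empty_or_nonempty with rfl | hT
  · simp
  set a := T.min' hT
  have ha : a ∈ T := T.min'_mem hT
  have hfloor : 0 ≤ ⌊L⌋ := Int.floor_nonneg.mpr (by simpa using h a ha a ha)
  have hsub : T ⊆ Finset.Icc a (a + ⌊L⌋) := fun b hb =>
    Finset.mem_Icc.mpr ⟨T.min'_le b hb, by linarith [Int.le_floor.mpr (h b hb a ha)]⟩
  calc T.card ≤ (Finset.Icc a (a + ⌊L⌋)).card := Finset.card_le_card hsub
    _ = ⌊L⌋₊ + 1 := by rw [Int.card_Icc, ← Int.floor_toNat]; omega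

theorem Finset.card_le_floor_add_one_of_eqOn_compl {ι : Type*} (t : Finset (ι → ℤ)) (a : ι)
    (L : ℝ) (hagree : ∀ g ∈ t, ∀ g' ∈ t, ∀ k ≠ a, g k = g' k)
    (hspread : ∀ g ∈ t, ∀ g' ∈ t, ((g a - g' a : ℤ) : ℝ) ≤ L) :
    t.card ≤ ⌊L⌋₊ + 1 := by
  classical
  have hinj : Set.InjOn (fun g : ι → ℤ => g a) t := fun g hg g' hg' hga => by
    funext k
    by_cases hk : k = a
    · exact hk ▸ hga
    · exact hagree g hg g' hg' k hk
  rw [← Finset.card_image_of_injOn hinj]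
  refine Int.card_le_floor_add_one_of_sub_le _ L ?_
  simp only [Finset.mem_image]
  rintro _ ⟨g, hg, rfl⟩ _ ⟨g', hg', rfl⟩
  exact hspread g hg g' hg'

theorem Finset.card_le_prod_floor_add_one {ι : Type*} [LinearOrder ι] (L : ι → ℝ)
    (s : Finset ι) (t : Finset (ι → ℤ)) (hout : ∀ g ∈ t, ∀ g' ∈ t, ∀ k ∉ s, g k = g' k)
    (hspread : ∀ j ∈ s, ∀ g ∈ t, ∀ g' ∈ t, (∀ k ∈ s, j < k → g k = g' k) →
      ((g j - g' j : ℤ) : ℝ) ≤ L j) :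
    t.card ≤ ∏ j ∈ s, (⌊L j⌋₊ + 1) := by
  classical
  induction s using Finset.induction_on_min generalizing t with
  | empty =>
    exact Finset.card_le_one.mpr fun g hg g' hg' =>
      funext fun k => hout g hg g' hg' k (Finset.notMem_empty k)
  | insert a s ha ih =>
    have has : a ∉ s := fun h => lt_irrefl a (ha a h)
    set φ : (ι → ℤ) → ι → ℤ := fun g => Function.update g a 0
    have hφ : ∀ g k, k ≠ a → φ g k = g k := fun g k hk => Function.update_of_ne hk 0 g
    have hfiber : ∀ h ∈ t.image φ, (t.filter (φ · = h)).card ≤ ⌊L a⌋₊ + 1 := by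
      intro h _
      refine Finset.card_le_floor_add_one_of_eqOn_compl _ a _ ?_ ?_
      · simp only [Finset.mem_filter]
        rintro g ⟨-, rfl⟩ g' ⟨-, hg'⟩ k hk
        rw [← hφ g k hk, ← hφ g' k hk, hg']
      · simp only [Finset.mem_filter]
        rintro g ⟨hg, rfl⟩ g' ⟨hg', hg'φ⟩
        refine hspread a (Finset.mem_insert_self a s) g hg g' hg' fun k _ hak => ?_
        rw [← hφ g k hak.ne', ← hφ g' k hak.ne', hg'φ]
    have himage : (t.image φ).card ≤ ∏ j ∈ s, (⌊L j⌋₊ + 1) := by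
      refine ih _ ?_ ?_
      · simp only [Finset.mem_image]
        rintro _ ⟨g, hg, rfl⟩ _ ⟨g', hg', rfl⟩ k hk
        by_cases hka : k = a
        · simp [φ, hka]
        · rw [hφ g k hka, hφ g' k hka]
          exact hout g hg g' hg' k (by simp [hka, hk])
      · simp only [Finset.mem_image]
        rintro j hj _ ⟨g, hg, rfl⟩ _ ⟨g', hg', rfl⟩ hagree
        have hja : j ≠ a := (ha j hj).ne'
        rw [hφ g j hja, hφ g' j hja]
        refine hspread j (Finset.mem_insert_of_mem hj) g hg g' hg' fun k hk hjk => ?_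
        have hka : k ≠ a := ((ha j hj).trans hjk).ne'
        have hks : k ∈ s := by simpa [hka] using hk
        rw [← hφ g k hka, ← hφ g' k hka]
        exact hagree k hks hjk
    calc t.card ≤ (⌊L a⌋₊ + 1) * (t.image φ).card :=
          Finset.card_le_mul_card_image t _ hfiber
      _ ≤ (⌊L a⌋₊ + 1) * ∏ j ∈ s, (⌊L j⌋₊ + 1) := Nat.mul_le_mul_left _ himage
      _ = ∏ j ∈ insert a s, (⌊L j⌋₊ + 1) := by rw [Finset.prod_insert has]


namespace InnerProductSpace

variable {E : Type*} [NormedAddCommGroup E] [InnerProductSpace ℝ E]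
  {ι : Type*} [LinearOrder ι] [LocallyFiniteOrderBot ι] [WellFoundedLT ι]

theorem inner_self_gramSchmidt (f : ι → E) (i : ι) :
    inner ℝ (f i) (gramSchmidt ℝ f i) = ‖gramSchmidt ℝ f i‖ ^ 2 := by
  conv_lhs => rw [gramSchmidt_def'' ℝ f i]
  rw [inner_add_left, real_inner_self_eq_norm_sq, sum_inner, Finset.sum_eq_zero, add_zero]
  intro k hk
  rw [real_inner_smul_left, gramSchmidt_orthogonal ℝ f (Finset.mem_Iio.mp hk).ne, mul_zero]

theorem inner_sum_smul_gramSchmidt [Fintype ι] (f : ι → E) (z : ι → ℝ)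
    (i : ι) (hz : ∀ k, i < k → z k = 0) :
    inner ℝ (∑ k, z k • f k) (gramSchmidt ℝ f i) = z i * ‖gramSchmidt ℝ f i‖ ^ 2 := by
  rw [sum_inner, Finset.sum_eq_single i]
  · rw [real_inner_smul_left, inner_self_gramSchmidt]
  · intro k _ hki
    rw [real_inner_smul_left]
    rcases hki.lt_or_gt with hk | hk
    · rw [real_inner_comm, gramSchmidt_inv_triangular ℝ f hk, mul_zero]
    · rw [hz k hk, zero_mul]
  · simp

theorem abs_mul_norm_gramSchmidt_le [Fintype ι] (f : ι → E) (z : ι → ℝ)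
    (i : ι) (hz : ∀ k, i < k → z k = 0) :
    |z i| * ‖gramSchmidt ℝ f i‖ ≤ ‖∑ k, z k • f k‖ := by
  set b := gramSchmidt ℝ f i
  rcases (norm_nonneg b).eq_or_lt with hb | hb
  · rw [← hb, mul_zero]
    exact norm_nonneg _
  refine le_of_mul_le_mul_right ?_ hb
  calc |z i| * ‖b‖ * ‖b‖ = |inner ℝ (∑ k, z k • f k) b| := by
        rw [inner_sum_smul_gramSchmidt f z i hz, abs_mul, abs_of_nonneg (sq_nonneg ‖b‖)]
        ring
    _ ≤ ‖∑ k, z k • f k‖ * ‖b‖ := abs_real_inner_le_norm _ _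

end InnerProductSpace

theorem EuclideanSpace.norm_le_norm_of_abs_le {n : Type*} [Fintype n]
    {x z : EuclideanSpace ℝ n} (h : ∀ j, |x j| ≤ |z j|) : ‖x‖ ≤ ‖z‖ := by
  rw [EuclideanSpace.norm_eq, EuclideanSpace.norm_eq]
  gcongr with j
  simpa only [Real.norm_eq_abs] using h j

theorem sum_smul_colsE_eq_mulVec (m r : ℕ) (B : Matrix (Fin m) (Fin r) ℝ) (z : Fin r → ℝ) :
    ∑ k, z k • colsE m r B k = (WithLp.equiv 2 (Fin m → ℝ)).symm (B.mulVec z) := by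
  ext j
  simp [colsE, Matrix.mulVec, dotProduct, mul_comm]

theorem abs_sub_mul_norm_gsE_le (m r : ℕ) (B : Matrix (Fin m) (Fin r) ℝ)
    (ℓ w : EuclideanSpace ℝ (Fin m)) {y y' : Fin r → ℝ}
    (hy : ∀ k, ℓ k ≤ B.mulVec y k ∧ B.mulVec y k ≤ w k)
    (hy' : ∀ k, ℓ k ≤ B.mulVec y' k ∧ B.mulVec y' k ≤ w k)
    (j : Fin r) (hagree : ∀ k, j < k → y k = y' k) :
    |y j - y' j| * ‖gsE (colsE m r B) j‖ ≤ ‖w - ℓ‖ := by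
  have hbox : ‖(WithLp.equiv 2 (Fin m → ℝ)).symm (B.mulVec (y - y'))‖ ≤ ‖w - ℓ‖ := by
    refine EuclideanSpace.norm_le_norm_of_abs_le fun k => ?_
    rw [Matrix.mulVec_sub]
    exact Set.abs_sub_le_of_uIcc_subset_uIcc (Set.uIcc_subset_uIcc
      (Set.mem_uIcc_of_le (hy' k).1 (hy' k).2) (Set.mem_uIcc_of_le (hy k).1 (hy k).2))
  calc |y j - y' j| * ‖gsE (colsE m r B) j‖
      ≤ ‖∑ k, (y - y') k • colsE m r B k‖ :=
        InnerProductSpace.abs_mul_norm_gramSchmidt_le _ (y - y') j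
          fun k hk => sub_eq_zero.mpr (hagree k hk)
    _ ≤ ‖w - ℓ‖ := by rwa [sum_smul_colsE_eq_mulVec]

/-- A node at the level of `y_i` is encoded by the integers `(γ_i, …, γ_r)` fixed on the path to
it, padded with zeros below `i`; it exists iff the corresponding slice of `P` is nonempty. -/
theorem bb_node_count (m r : ℕ) (B : Matrix (Fin m) (Fin (r + 1)) ℝ)
    (hB : LinearIndependent ℝ (colsE m (r + 1) B))
    (ℓ w : EuclideanSpace ℝ (Fin m))
    (P : Set (Fin (r + 1) → ℝ))
    (hP : P = {y | ∀ i, ℓ i ≤ B.mulVec y i ∧ B.mulVec y i ≤ w i})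
    (i : Fin (r + 1))
    (nodes : Set (Fin (r + 1) → ℤ))
    (hnodes : nodes = { g | (∃ y ∈ P, ∀ j, i ≤ j → y j = (g j : ℝ)) ∧
      (∀ j, j < i → g j = 0) }) :
    nodes.Finite ∧
      nodes.ncard ≤ ∏ j ∈ Finset.Icc i (Fin.last r),
        (⌊‖w - ℓ‖ / ‖gsE (colsE m (r + 1) B) j‖⌋₊ + 1) := by
  subst hP hnodes
  refine Set.finite_and_ncard_le_of_forall_finset_card_le fun t ht => ?_
  refine Finset.card_le_prod_floor_add_one _ _ t ?_ ?_
  · intro g hg g' hg' k hk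
    have hki : k < i :=
      lt_of_not_ge fun hik => hk (Finset.mem_Icc.mpr ⟨hik, Fin.le_last k⟩)
    rw [(ht hg).2 k hki, (ht hg').2 k hki]
  · intro j hj g hg g' hg' hagree
    have hij : i ≤ j := (Finset.mem_Icc.mp hj).1
    obtain ⟨y, hy, hyg⟩ := (ht hg).1
    obtain ⟨y', hy', hy'g⟩ := (ht hg').1
    have hyy' : ∀ k, j < k → y k = y' k := fun k hjk => by
      rw [hyg k (hij.trans hjk.le), hy'g k (hij.trans hjk.le),
        hagree k (Finset.mem_Icc.mpr ⟨hij.trans hjk.le, Fin.le_last k⟩) hjk]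
    have hspread := abs_sub_mul_norm_gsE_le m (r + 1) B ℓ w hy hy' j hyy'
    rw [hyg j hij, hy'g j hij] at hspread
    have hb : 0 < ‖gsE (colsE m (r + 1) B) j‖ :=
      norm_pos_iff.mpr (InnerProductSpace.gramSchmidt_ne_zero j hB)
    rw [le_div_iff₀ hb]
    push_cast
    exact (mul_le_mul_of_nonneg_right (le_abs_self _) (norm_nonneg _)).trans hspread
end

section
/- Let G_{m,n}(M) be the set of m×n integer matrices with entries in {1,...,M}. For a positive integer k, the fraction ε_R of A ∈ G_{m,n}(M) for which the lattice L_R(A) generated by the columns of the (m+n)×n matrix (A; I) contains a nonzero vector of norm at most k satisfies ε_R ≤ (2k+1)^{n+m} / M^m. -/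
/-- The Euclidean norm of an integer vector. -/
noncomputable def intNorm {n : ℕ} (v : Fin n → ℤ) : ℝ :=
  Real.sqrt (∑ i, ((v i : ℝ)) ^ 2)

/-!
A nonzero vector of `L_R(A)` is `(A *ᵥ v, v)` with `v ≠ 0`, and if its norm is at most `k` then it
lies in the box `[-k, k]^(m+n)`, which holds at most `(2k+1)^(n+m)` such pairs `(w, v)`. For a fixed
pair with `v ≠ 0`, the equation `A *ᵥ v = w` determines, in each row of `A`, the entry at a
coordinate where `v` does not vanish, so at most `M^(m(n-1))` matrices solve it. Dividing by
`#G_{m,n}(M) = M^(mn)` gives the bound.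
-/

open Finset Matrix

section Counting

variable {ι R : Type*} [Fintype ι] [DecidableEq ι]

theorem eq_of_dotProduct_eq_of_forall_ne [Ring R] [NoZeroDivisors R] {x y v : ι → R} {j₀ : ι}
    (hj₀ : v j₀ ≠ 0) (hxy : x ⬝ᵥ v = y ⬝ᵥ v) (hoff : ∀ j ≠ j₀, x j = y j) : x = y := by
  have hsingle : x - y = Pi.single j₀ (x j₀ - y j₀) := by
    ext j
    by_cases hj : j = j₀
    · subst hj; simp
    · simp [hj, hoff j hj]
  have h0 : (x j₀ - y j₀) * v j₀ = 0 := by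
    rw [← single_dotProduct, ← hsingle, sub_dotProduct, hxy, sub_self]
  funext j
  by_cases hj : j = j₀
  · subst hj; exact sub_eq_zero.mp ((mul_eq_zero.mp h0).resolve_right hj₀)
  · exact hoff j hj

variable [DecidableEq R] [Ring R] [NoZeroDivisors R]

theorem card_filter_dotProduct_eq_le (s : Finset R) {v : ι → R} (hv : v ≠ 0) (c : R) :
    #{x ∈ Fintype.piFinset fun _ => s | x ⬝ᵥ v = c} ≤ #s ^ (Fintype.card ι - 1) := by
  obtain ⟨j₀, hj₀⟩ := Function.ne_iff.mp hv
  -- a solution is determined by its coordinates off `j₀`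
  calc _ ≤ #(Fintype.piFinset fun _ : {j // j ≠ j₀} => s) := by
        refine card_le_card_of_injOn (fun x j => x j) (fun x hx => ?_) fun x hx y hy hxy => ?_
        · simp_all [Fintype.mem_piFinset]
        simp only [coe_filter, Set.mem_ofPred_eq] at hx hy
        exact eq_of_dotProduct_eq_of_forall_ne hj₀ (hx.2.trans hy.2.symm)
          fun j hj => congrFun hxy ⟨j, hj⟩
    _ = #s ^ (Fintype.card ι - 1) := by simp [Fintype.card_piFinset]

end Counting

section MatrixFinset

variable (m n : Type*) [Fintype m] [Fintype n] [DecidableEq m] [DecidableEq n] {R : Type*}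

def matrixFinset (s : Finset R) : Finset (Matrix m n R) :=
  Fintype.piFinset fun _ => Fintype.piFinset fun _ => s

variable {m n}

theorem mem_matrixFinset {s : Finset R} {A : Matrix m n R} :
    A ∈ matrixFinset m n s ↔ ∀ i j, A i j ∈ s :=
  Fintype.mem_piFinset.trans <| forall_congr' fun _ => Fintype.mem_piFinset

theorem card_matrixFinset (s : Finset R) :
    #(matrixFinset m n s) = (#s ^ Fintype.card n) ^ Fintype.card m :=
  (Fintype.card_piFinset _).trans <| by simp [Fintype.card_piFinset]

theorem card_filter_mulVec_eq_le [DecidableEq R] [Ring R] [NoZeroDivisors R] (s : Finset R)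
    {v : n → R} (hv : v ≠ 0) (w : m → R) :
    #{A ∈ matrixFinset m n s | A *ᵥ v = w} ≤ (#s ^ (Fintype.card n - 1)) ^ Fintype.card m := by
  -- the equation `A *ᵥ v = w` constrains each row of `A` separately
  calc _ ≤ #(Fintype.piFinset fun i => {x ∈ Fintype.piFinset fun _ => s | x ⬝ᵥ v = w i}) := by
        refine card_le_card fun A hA => ?_
        rw [mem_filter, mem_matrixFinset] at hA
        exact Fintype.mem_piFinset.mpr fun i =>
          mem_filter.mpr ⟨Fintype.mem_piFinset.mpr (hA.1 i), congrFun hA.2 i⟩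
    _ ≤ _ := by
        rw [Fintype.card_piFinset]
        exact (prod_le_pow_card _ _ _ fun i _ => card_filter_dotProduct_eq_le s hv (w i)).trans_eq
          (by rw [card_univ])

end MatrixFinset

theorem mem_piFinset_Icc_of_sum_sq_le {ι : Type*} [Fintype ι] [DecidableEq ι] {x : ι → ℤ} {k : ℕ}
    (h : ∑ i, (x i : ℝ) ^ 2 ≤ (k : ℝ) ^ 2) : x ∈ Fintype.piFinset fun _ => Icc (-(k : ℤ)) k := by
  refine Fintype.mem_piFinset.mpr fun i => mem_Icc.mpr (abs_le_of_sq_le_sq' ?_ (by positivity))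
  exact_mod_cast (single_le_sum (fun j _ => sq_nonneg (x j : ℝ)) (mem_univ i)).trans h

theorem mem_piFinset_Icc_prod_of_sqrt_le {ι κ : Type*} [Fintype ι] [DecidableEq ι] [Fintype κ]
    [DecidableEq κ] {w : ι → ℤ} {v : κ → ℤ} {k : ℕ}
    (h : √(∑ i, (w i : ℝ) ^ 2 + ∑ j, (v j : ℝ) ^ 2) ≤ k) :
    (w, v) ∈ (Fintype.piFinset fun _ => Icc (-(k : ℤ)) k) ×ˢ
      (Fintype.piFinset fun _ => Icc (-(k : ℤ)) k) := by
  have hsum := (Real.sqrt_le_left (Nat.cast_nonneg k)).mp h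
  have hw : 0 ≤ ∑ i, (w i : ℝ) ^ 2 := by positivity
  have hv : 0 ≤ ∑ j, (v j : ℝ) ^ 2 := by positivity
  exact mem_product.mpr ⟨mem_piFinset_Icc_of_sum_sq_le (by linarith),
    mem_piFinset_Icc_of_sum_sq_le (by linarith)⟩

theorem ncard_setOf_exists_short_le {m n : Type*} [Fintype m] [DecidableEq m] [Fintype n]
    [DecidableEq n] (M k : ℕ) :
    {A ∈ (matrixFinset m n (Icc (1 : ℤ) M) : Set (Matrix m n ℤ)) | ∃ v : n → ℤ, v ≠ 0 ∧
      √(∑ i, ((A *ᵥ v) i : ℝ) ^ 2 + ∑ j, (v j : ℝ) ^ 2) ≤ k}.ncard ≤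
      (2 * k + 1) ^ (Fintype.card n + Fintype.card m) *
        (M ^ (Fintype.card n - 1)) ^ Fintype.card m := by
  set short := {p ∈ (Fintype.piFinset fun _ : m => Icc (-(k : ℤ)) k) ×ˢ
    (Fintype.piFinset fun _ : n => Icc (-(k : ℤ)) k) | p.2 ≠ 0}
  have hIcc : #(Icc (-(k : ℤ)) k) = 2 * k + 1 := by simp; omega
  calc _ ≤ (↑(short.biUnion fun p => {A ∈ matrixFinset m n (Icc (1 : ℤ) M) | A *ᵥ p.2 = p.1}) :
        Set (Matrix m n ℤ)).ncard := by
        refine Set.ncard_le_ncard ?_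
        rintro A ⟨hA, v, hv, hlen⟩
        exact mem_biUnion.mpr ⟨(A *ᵥ v, v),
          mem_filter.mpr ⟨mem_piFinset_Icc_prod_of_sqrt_le hlen, hv⟩, mem_filter.mpr ⟨hA, rfl⟩⟩
    _ = #(short.biUnion _) := Set.ncard_coe_finset _
    _ ≤ #short * (M ^ (Fintype.card n - 1)) ^ Fintype.card m :=
        card_biUnion_le_card_mul _ _ _ fun p hp => by
          simpa using card_filter_mulVec_eq_le (Icc (1 : ℤ) M) (mem_filter.mp hp).2 p.1
    _ ≤ _ := by
        gcongr
        refine card_filter_le _ _ |>.trans_eq ?_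
        simp [card_product, Fintype.card_piFinset, hIcc, pow_add, mul_comm]

theorem rangespace_lattice_fraction_general (m n M k : ℕ) (hn : 0 < n) (hM : 0 < M)
    (G bad : Set (Matrix (Fin m) (Fin n) ℤ))
    (hG : G = { A | ∀ i j, A i j ∈ Finset.Icc (1 : ℤ) M })
    (hbad : bad = { A ∈ G | ∃ v : Fin n → ℤ, v ≠ 0 ∧
      Real.sqrt ((∑ i, ((A.mulVec v) i : ℝ) ^ 2) + ∑ j, ((v j : ℝ)) ^ 2) ≤ k }) :
    (bad.ncard : ℝ) / (G.ncard : ℝ) ≤ (2 * k + 1) ^ (n + m) / (M : ℝ) ^ m := by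
  have hG' : G = matrixFinset (Fin m) (Fin n) (Icc (1 : ℤ) M) := by
    ext A; simp [hG, mem_matrixFinset]
  have hbad_card : bad.ncard ≤ (2 * k + 1) ^ (n + m) * (M ^ (n - 1)) ^ m := by
    simpa [hbad, hG'] using ncard_setOf_exists_short_le (m := Fin m) (n := Fin n) M k
  have hG_card : (G.ncard : ℝ) = ((M : ℝ) ^ (n - 1)) ^ m * (M : ℝ) ^ m := by
    rw [hG', Set.ncard_coe_finset, card_matrixFinset, ← mul_pow, pow_sub_one_mul hn.ne']
    simp
  rw [hG_card, div_le_div_iff₀ (by positivity) (by positivity)]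
  calc (bad.ncard : ℝ) * (M : ℝ) ^ m
      ≤ (2 * k + 1) ^ (n + m) * ((M : ℝ) ^ (n - 1)) ^ m * M ^ m := by
        gcongr; exact_mod_cast hbad_card
    _ = _ := by ring

/-- among the `m × n` integer matrices with entries in `{1, ..., M}`, the fraction
of those for which the lattice `L_R(A) = {(Ax; x) : x ∈ ℤ^n}` contains a nonzero vector of
norm at most `k` is at most `(2k+1)^{n+m} / M^m`. -/
theorem rangespace_lattice_fraction (m n M k : ℕ) (hm : 0 < m) (hn : 0 < n) (hM : 0 < M)
    (hk : 0 < k)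
    (G bad : Set (Matrix (Fin m) (Fin n) ℤ))
    (hG : G = { A | ∀ i j, A i j ∈ Finset.Icc (1 : ℤ) M })
    (hbad : bad = { A ∈ G | ∃ v : Fin n → ℤ, v ≠ 0 ∧
      Real.sqrt ((∑ i, ((A.mulVec v) i : ℝ) ^ 2) + ∑ j, ((v j : ℝ)) ^ 2) ≤ k }) :
    (bad.ncard : ℝ) / (G.ncard : ℝ) ≤ (2 * k + 1) ^ (n + m) / (M : ℝ) ^ m :=
  rangespace_lattice_fraction_general m n M k hn hM G bad hG hbad
end

section
/- Let A be an m×n integer matrix with linearly independent rows, and let B be an n×(n−m) integer matrix whose columns form a basis of the lattice L_N(A) = { x ∈ Z^n : Ax = 0 }, with Gram-Schmidt vectors b_1^*, ..., b_{n−m}^*. If ‖b_i^*‖ > ‖w_2 − ℓ_2‖ for all i, then the polyhedron Q_N = { y ∈ R^{n−m} : ℓ_2 − x_0 ≤ By ≤ w_2 − x_0 } contains at most one integral point, for any x_0 ∈ Z^n. -/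
open InnerProductSpace RealInnerProductSpace Finset Matrix

section GramSchmidt

variable {E ι : Type*} [NormedAddCommGroup E] [InnerProductSpace ℝ E]
  [LinearOrder ι] [LocallyFiniteOrderBot ι] [WellFoundedLT ι]

theorem real_inner_gramSchmidt_self (f : ι → E) (i : ι) :
    ⟪gramSchmidt ℝ f i, f i⟫ = ‖gramSchmidt ℝ f i‖ ^ 2 := by
  rw [gramSchmidt_def'' ℝ f i, inner_add_right, inner_sum, real_inner_self_eq_norm_sq,
    add_eq_left]
  refine sum_eq_zero fun k hk => ?_
  rw [real_inner_smul_right, gramSchmidt_orthogonal ℝ f (mem_Iio.mp hk).ne', mul_zero]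

variable [Fintype ι]

theorem real_inner_gramSchmidt_sum_smul {f : ι → E} {c : ι → ℝ} {i : ι}
    (hc : ∀ j, i < j → c j = 0) :
    ⟪gramSchmidt ℝ f i, ∑ j, c j • f j⟫ = c i * ‖gramSchmidt ℝ f i‖ ^ 2 := by
  rw [inner_sum, sum_eq_single i, real_inner_smul_right, real_inner_gramSchmidt_self]
  · intro j _ hji
    rcases hji.lt_or_gt with hji | hij
    · rw [real_inner_smul_right, gramSchmidt_inv_triangular ℝ f hji, mul_zero]
    · rw [hc j hij, zero_smul, inner_zero_right]
  · exact fun h => absurd (mem_univ i) h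

theorem exists_norm_gramSchmidt_le_norm_sum_intCast_smul {f : ι → E}
    (hf : LinearIndependent ℝ f) {c : ι → ℤ} (hc : c ≠ 0) :
    ∃ i, ‖gramSchmidt ℝ f i‖ ≤ ‖∑ j, (c j : ℝ) • f j‖ := by
  classical
  have hsupp : (univ.filter (c · ≠ 0)).Nonempty := by
    obtain ⟨j, hj⟩ := Function.ne_iff.mp hc
    exact ⟨j, mem_filter.mpr ⟨mem_univ j, hj⟩⟩
  set i := (univ.filter (c · ≠ 0)).max' hsupp
  have hci : c i ≠ 0 := (mem_filter.mp ((univ.filter (c · ≠ 0)).max'_mem hsupp)).2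
  have hlast : ∀ j, i < j → (c j : ℝ) = 0 := fun j hij => by
    by_contra hcj
    exact hij.not_ge ((univ.filter (c · ≠ 0)).le_max' j (by simpa using hcj))
  -- Pairing with the Gram-Schmidt vector of the last nonzero coefficient kills every other
  -- term and leaves `c i * ‖g‖ ^ 2`, where `|c i| ≥ 1`.
  refine ⟨i, ?_⟩
  set g := gramSchmidt ℝ f i
  set v := ∑ j, (c j : ℝ) • f j
  have hg : 0 < ‖g‖ := norm_pos_iff.mpr (gramSchmidt_ne_zero i hf)
  have hci : (1 : ℝ) ≤ |(c i : ℝ)| := by exact_mod_cast Int.one_le_abs hci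
  have hcs : |(c i : ℝ)| * ‖g‖ ^ 2 ≤ ‖g‖ * ‖v‖ := by
    have := abs_real_inner_le_norm g v
    rwa [real_inner_gramSchmidt_sum_smul hlast, abs_mul, abs_of_nonneg (sq_nonneg ‖g‖)] at this
  nlinarith

end GramSchmidt

theorem EuclideanSpace.dist_le_of_forall_mem_uIcc {ι : Type*} [Fintype ι]
    {x y a b : EuclideanSpace ℝ ι} (hx : ∀ k, x k ∈ Set.uIcc (a k) (b k))
    (hy : ∀ k, y k ∈ Set.uIcc (a k) (b k)) : dist x y ≤ dist a b := by
  rw [EuclideanSpace.dist_eq, EuclideanSpace.dist_eq]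
  gcongr with k
  exact Real.dist_le_of_mem_uIcc (hx k) (hy k)

theorem sum_smul_colsE (m r : ℕ) (B : Matrix (Fin m) (Fin r) ℝ) (c : Fin r → ℝ) :
    ∑ j, c j • colsE m r B j = WithLp.toLp 2 (B *ᵥ c) := by
  ext k
  simp [colsE, mulVec, dotProduct, mul_comm]

theorem nullspace_reformulation_subsingleton_general (m n : ℕ)
    (B : Matrix (Fin n) (Fin (n - m)) ℤ)
    (hBindep : LinearIndependent ℝ (colsE n (n - m) (B.map (Int.cast : ℤ → ℝ))))
    (ℓ₂ w₂ : EuclideanSpace ℝ (Fin n)) (x₀ : Fin n → ℤ)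
    (hgap : ∀ i, ‖w₂ - ℓ₂‖ < ‖gsE (colsE n (n - m) (B.map (Int.cast : ℤ → ℝ))) i‖) :
    { y : Fin (n - m) → ℤ |
      ∀ i, ℓ₂ i - (x₀ i : ℝ) ≤ (B.map (Int.cast : ℤ → ℝ)).mulVec (fun j => (y j : ℝ)) i ∧
        (B.map (Int.cast : ℤ → ℝ)).mulVec (fun j => (y j : ℝ)) i ≤ w₂ i - (x₀ i : ℝ)
      }.Subsingleton := by
  intro y hy z hz
  by_contra hne
  set B' := B.map (Int.cast : ℤ → ℝ)
  obtain ⟨i, hi⟩ := exists_norm_gramSchmidt_le_norm_sum_intCast_smul hBindep (sub_ne_zero.mpr hne)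
  set x₀' : EuclideanSpace ℝ (Fin n) := WithLp.toLp 2 fun k => (x₀ k : ℝ)
  have hlattice : ∑ j, ((y - z) j : ℝ) • colsE n (n - m) B' j =
      WithLp.toLp 2 (B' *ᵥ fun j => (y j : ℝ)) - WithLp.toLp 2 (B' *ᵥ fun j => (z j : ℝ)) := by
    rw [sum_smul_colsE, ← WithLp.toLp_sub, ← mulVec_sub]
    congr 2
    ext j
    simp
  have hbox : dist (WithLp.toLp 2 (B' *ᵥ fun j => (y j : ℝ)))
      (WithLp.toLp 2 (B' *ᵥ fun j => (z j : ℝ))) ≤ dist (ℓ₂ - x₀') (w₂ - x₀') :=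
    EuclideanSpace.dist_le_of_forall_mem_uIcc (fun k => Set.Icc_subset_uIcc (hy k))
      (fun k => Set.Icc_subset_uIcc (hz k))
  rw [dist_sub_right, dist_comm ℓ₂, dist_eq_norm, dist_eq_norm, ← hlattice] at hbox
  exact (hgap i).not_ge (hi.trans hbox)

/-- if the columns of `B` form a basis of `L_N(A) = {x ∈ ℤ^n : Ax = 0}` whose
Gram-Schmidt vectors all satisfy `‖b_i^*‖ > ‖w₂ - ℓ₂‖`, then the nullspace reformulation
polyhedron `Q_N = {y : ℓ₂ - x₀ ≤ By ≤ w₂ - x₀}` contains at most one integral point. -/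
theorem nullspace_reformulation_subsingleton (m n : ℕ) (hmn : m ≤ n)
    (A : Matrix (Fin m) (Fin n) ℤ)
    (hA : LinearIndependent ℚ (fun i : Fin m => fun j : Fin n => (A i j : ℚ)))
    (B : Matrix (Fin n) (Fin (n - m)) ℤ)
    (hBnull : ∀ j, A.mulVec (fun i => B i j) = 0)
    (hBindep : LinearIndependent ℝ (colsE n (n - m) (B.map (Int.cast : ℤ → ℝ))))
    (hBspan : ∀ x : Fin n → ℤ, A.mulVec x = 0 → ∃ c : Fin (n - m) → ℤ, x = B.mulVec c)
    (ℓ₂ w₂ : EuclideanSpace ℝ (Fin n)) (x₀ : Fin n → ℤ)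
    (hgap : ∀ i, ‖w₂ - ℓ₂‖ < ‖gsE (colsE n (n - m) (B.map (Int.cast : ℤ → ℝ))) i‖) :
    { y : Fin (n - m) → ℤ |
      ∀ i, ℓ₂ i - (x₀ i : ℝ) ≤ (B.map (Int.cast : ℤ → ℝ)).mulVec (fun j => (y j : ℝ)) i ∧
        (B.map (Int.cast : ℤ → ℝ)).mulVec (fun j => (y j : ℝ)) i ≤ w₂ i - (x₀ i : ℝ)
      }.Subsingleton :=
  nullspace_reformulation_subsingleton_general m n B hBindep ℓ₂ w₂ x₀ hgap
end

section
/- Let A be an m×n integer matrix with linearly independent rows. The determinant of the lattice L_N(A) = { x ∈ Z^n : Ax = 0 } equals det(A Aᵀ)^{1/2} / gcd(A), where gcd(A) is the greatest common divisor of all m×m subdeterminants of A. -/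
/-!
The quotient `ℤⁿ / L_N(A)` embeds in `ℤᵐ`, so it is free and the columns of `B` extend to a
unimodular matrix `V = [W | B]`. Then `A V = [A W | 0]`, so `A = (A W) U₁` with `U₁` the first block
row of `V⁻¹`; together with the expansion of `det (A N)` in the maximal minors of `A` this gives
`gcd(A) = |det (A W)|`. For `C = [A; Bᵀ]` the products `C Cᵀ = diag(A Aᵀ, Bᵀ B)` and
`C V = [[A W, 0], [Bᵀ W, Bᵀ B]]` are block triangular, and `det V = ±1`, so
`det (A Aᵀ) = det (A W)² det (Bᵀ B)`.
-/

/-- The gcd of the `m × m` subdeterminants (maximal minors) of an `m × n` integer matrix. -/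
noncomputable def gcdMinors (m n : ℕ) (A : Matrix (Fin m) (Fin n) ℤ) : ℕ :=
  Finset.univ.gcd fun f : Fin m ↪ Fin n => (A.submatrix id f).det.natAbs

open Matrix

universe u in
theorem LinearMap.exists_basis_sum_extending_ker {R M σ : Type*} {N : Type u} [CommRing R]
    [IsDomain R] [IsPrincipalIdealRing R] [AddCommGroup M] [Module R M] [AddCommGroup N]
    [Module R N] [Module.Free R N] [Module.Finite R N] (f : M →ₗ[R] N)
    (v : Module.Basis σ R (ker f)) :
    ∃ (τ : Type u) (_ : Fintype τ) (b : Module.Basis (σ ⊕ τ) R M), ∀ t, b (.inl t) = v t := by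
  have hexact : Function.Exact (ker f).subtype f.rangeRestrict := by
    rw [LinearMap.exact_iff, ker_rangeRestrict, Submodule.range_subtype]
  obtain ⟨l, hl⟩ := Module.projective_lifting_property f.rangeRestrict LinearMap.id
    f.surjective_rangeRestrict
  obtain ⟨e, he, -⟩ := hexact.splitSurjectiveEquiv (ker f).subtype_injective ⟨l, hl⟩
  refine ⟨_, inferInstance, (v.prod (Module.Free.chooseBasis R (range f))).map e.symm, fun t => ?_⟩
  simpa using (LinearMap.congr_fun he (v t)).symm

namespace Matrix

variable {R : Type*} [CommRing R] {l m n k : Type*} [Fintype m] [Fintype n] [Fintype k]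

theorem det_mul_eq_sum_prod_mul_det_submatrix [DecidableEq m] (P : Matrix m n R)
    (Q : Matrix n m R) :
    (P * Q).det = ∑ φ : m → n, (∏ i, P i (φ i)) * (Q.submatrix φ id).det := by
  have h : (P * Q).det = detRowAlternating.toMultilinearMap (fun i => ∑ t, P i t • Q t) := by
    show _ = det _
    congr 1
    ext i j
    simp [mul_apply, Finset.sum_apply]
  rw [h, MultilinearMap.map_sum]
  refine Finset.sum_congr rfl fun φ _ => ?_
  rw [MultilinearMap.map_smul_univ]
  rfl

theorem exists_fromCols_mul_eq_one [IsDomain R] [IsPrincipalIdealRing R] [DecidableEq n]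
    (A : Matrix m n R) (B : Matrix n k R) (hAB : A * B = 0) (hB : LinearIndependent R B.col)
    (hspan : ∀ x, A *ᵥ x = 0 → ∃ c, x = B *ᵥ c)
    (hcard : Fintype.card m + Fintype.card k = Fintype.card n) :
    ∃ (W : Matrix n m R) (U : Matrix (m ⊕ k) n R), fromCols W B * U = 1 := by
  have hker : Submodule.span R (Set.range B.col) = LinearMap.ker A.mulVecLin := by
    rw [← range_mulVecLin]
    refine le_antisymm (LinearMap.range_le_ker_iff.mpr ?_) fun x hx => ?_
    · rw [← mulVecLin_mul, hAB, mulVecLin_zero]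
    · obtain ⟨c, rfl⟩ := hspan x hx
      exact ⟨c, rfl⟩
  obtain ⟨τ, _, b, hb⟩ := A.mulVecLin.exists_basis_sum_extending_ker
    ((Module.Basis.span hB).map (LinearEquiv.ofEq _ _ hker))
  have hτ : Fintype.card τ = Fintype.card m := by
    have := Fintype.card_congr (b.indexEquiv (Pi.basisFun R n))
    rw [Fintype.card_sum] at this
    omega
  let b' := b.reindex ((Equiv.sumComm k τ).trans
    (Equiv.sumCongr (Fintype.equivOfCardEq hτ) (Equiv.refl k)))
  refine ⟨((Pi.basisFun R n).toMatrix b').toCols₁, b'.toMatrix (Pi.basisFun R n), ?_⟩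
  convert (Pi.basisFun R n).toMatrix_mul_toMatrix_flip b'
  conv_rhs => rw [← fromCols_toCols ((Pi.basisFun R n).toMatrix b')]
  congr
  ext i t
  simp [b', hb, Module.Basis.toMatrix_apply, Module.Basis.span_apply]

theorem mul_mul_toRows₁_of_fromCols_mul_eq_one [DecidableEq n] (A : Matrix l n R)
    (B : Matrix n k R) (W : Matrix n m R) (U : Matrix (m ⊕ k) n R) (hAB : A * B = 0)
    (hWBU : fromCols W B * U = 1) :
    A * W * U.toRows₁ = A :=
  calc A * W * U.toRows₁ = A * (fromCols W B * fromRows U.toRows₁ U.toRows₂) := by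
        rw [fromCols_mul_fromRows, Matrix.mul_add, ← Matrix.mul_assoc, ← Matrix.mul_assoc, hAB,
          Matrix.zero_mul, add_zero]
    _ = A := by rw [fromRows_toRows, hWBU, Matrix.mul_one]

section BlockDeterminants

variable [DecidableEq m] [DecidableEq k]

theorem det_fromRows_submatrix_sq (A : Matrix m n R) (B : Matrix n k R) (hAB : A * B = 0)
    (e : m ⊕ k ≃ n) :
    ((fromRows A Bᵀ).submatrix id e).det ^ 2 = (A * Aᵀ).det * (Bᵀ * B).det := by
  have hBA : Bᵀ * Aᵀ = 0 := by rw [← transpose_mul, hAB, transpose_zero]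
  calc ((fromRows A Bᵀ).submatrix id e).det ^ 2
      = ((fromRows A Bᵀ).submatrix id e * ((fromRows A Bᵀ).submatrix id e)ᵀ).det := by
        rw [det_mul, det_transpose, sq]
    _ = (fromBlocks (A * Aᵀ) 0 0 (Bᵀ * B)).det := by
        rw [transpose_submatrix, ← submatrix_mul _ _ _ _ _ e.bijective, submatrix_id_id,
          transpose_fromRows, transpose_transpose, fromRows_mul_fromCols, hAB, hBA]
    _ = (A * Aᵀ).det * (Bᵀ * B).det := det_fromBlocks_zero₁₂ _ _ _

theorem det_fromRows_submatrix_mul_det_fromCols_submatrix (A : Matrix m n R) (B : Matrix n k R)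
    (W : Matrix n m R) (hAB : A * B = 0) (e : m ⊕ k ≃ n) :
    ((fromRows A Bᵀ).submatrix id e).det * ((fromCols W B).submatrix e id).det =
      (A * W).det * (Bᵀ * B).det := by
  rw [← det_mul, ← submatrix_mul _ _ _ _ _ e.bijective, submatrix_id_id, fromRows_mul_fromCols,
    hAB, det_fromBlocks_zero₁₂]

theorem det_mul_transpose_eq_sq_mul [DecidableEq n] (A : Matrix m n ℤ) (B : Matrix n k ℤ)
    (W : Matrix n m ℤ) (U : Matrix (m ⊕ k) n ℤ) (hAB : A * B = 0) (hWBU : fromCols W B * U = 1)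
    (hcard : Fintype.card m + Fintype.card k = Fintype.card n) (hB : (Bᵀ * B).det ≠ 0) :
    (A * Aᵀ).det = (A * W).det ^ 2 * (Bᵀ * B).det := by
  obtain e : m ⊕ k ≃ n := Fintype.equivOfCardEq (by rw [Fintype.card_sum, hcard])
  have hV : ((fromCols W B).submatrix e id).det ^ 2 = 1 := by
    refine Int.isUnit_sq (isUnit_det_of_right_inverse (B := U.submatrix id e) ?_)
    rw [← submatrix_mul _ _ _ _ _ Function.bijective_id, hWBU, submatrix_one_equiv]
  refine mul_right_cancel₀ hB ?_
  calc (A * Aᵀ).det * (Bᵀ * B).det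
      = ((fromRows A Bᵀ).submatrix id e).det ^ 2 * ((fromCols W B).submatrix e id).det ^ 2 := by
        rw [hV, mul_one, det_fromRows_submatrix_sq A B hAB]
    _ = (A * W).det ^ 2 * (Bᵀ * B).det * (Bᵀ * B).det := by
        rw [← mul_pow, det_fromRows_submatrix_mul_det_fromCols_submatrix A B W hAB]
        ring

end BlockDeterminants

theorem det_mul_transpose_ne_zero {K : Type*} [Field K] [LinearOrder K] [IsStrictOrderedRing K]
    [DecidableEq m] {M : Matrix m n K} (h : LinearIndependent K M.row) : (M * Mᵀ).det ≠ 0 := by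
  have hker : LinearMap.ker (Mᵀᵀ * Mᵀ).mulVecLin = ⊥ := by
    rw [ker_mulVecLin_transpose_mul_self, ker_mulVecLin_eq_bot_iff]
    intro v hv
    rw [mulVec_transpose] at hv
    exact vecMul_injective_iff.mpr h (hv.trans (zero_vecMul M).symm)
  rwa [transpose_transpose, LinearMap.ker_eq_bot, coe_mulVecLin, mulVec_injective_iff_isUnit,
    isUnit_iff_isUnit_det, isUnit_iff_ne_zero] at hker

theorem det_mul_transpose_ne_zero_of_map {S K : Type*} [CommRing S] [Field K] [LinearOrder K]
    [IsStrictOrderedRing K] [DecidableEq m] (f : S →+* K) (hf : Function.Injective f)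
    {M : Matrix m n S} (h : LinearIndependent K (M.map f).row) : (M * Mᵀ).det ≠ 0 := by
  have := det_mul_transpose_ne_zero h
  rwa [← transpose_map, ← Matrix.map_mul, ← RingHom.mapMatrix_apply, ← RingHom.map_det,
    map_ne_zero_iff _ hf] at this

end Matrix

section gcdMinors

variable {m n : ℕ} (A : Matrix (Fin m) (Fin n) ℤ)

theorem gcdMinors_dvd_det_submatrix (φ : Fin m → Fin n) :
    (gcdMinors m n A : ℤ) ∣ (A.submatrix id φ).det := by
  by_cases hφ : φ.Injective
  · exact Int.natCast_dvd.mpr (Finset.gcd_dvd (f := fun f : Fin m ↪ Fin n =>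
      (A.submatrix id f).det.natAbs) (Finset.mem_univ ⟨φ, hφ⟩))
  · obtain ⟨i, j, hij, hne⟩ : ∃ i j, φ i = φ j ∧ i ≠ j := by
      simpa [Function.Injective] using hφ
    rw [det_zero_of_column_eq hne fun r => by simp [hij]]
    exact dvd_zero _

theorem gcdMinors_dvd_det_mul (N : Matrix (Fin n) (Fin m) ℤ) :
    (gcdMinors m n A : ℤ) ∣ (A * N).det := by
  rw [← det_transpose, transpose_mul, det_mul_eq_sum_prod_mul_det_submatrix]
  refine Finset.dvd_sum fun φ _ => Dvd.dvd.mul_left ?_ _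
  rw [← transpose_submatrix, det_transpose]
  exact gcdMinors_dvd_det_submatrix A φ

theorem natAbs_det_dvd_gcdMinors (A₁ : Matrix (Fin m) (Fin m) ℤ) (U₁ : Matrix (Fin m) (Fin n) ℤ)
    (h : A₁ * U₁ = A) : A₁.det.natAbs ∣ gcdMinors m n A :=
  Finset.dvd_gcd fun f _ => by
    rw [← h, submatrix_mul (e₂ := id) _ _ _ _ Function.bijective_id, submatrix_id_id, det_mul]
    exact Int.natAbs_dvd_natAbs.mpr (dvd_mul_right _ _)

theorem gcdMinors_eq_natAbs_det_mul (W : Matrix (Fin n) (Fin m) ℤ) (U₁ : Matrix (Fin m) (Fin n) ℤ)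
    (h : A * W * U₁ = A) : gcdMinors m n A = (A * W).det.natAbs :=
  Nat.dvd_antisymm (Int.natCast_dvd.mp (gcdMinors_dvd_det_mul A W))
    (natAbs_det_dvd_gcdMinors A _ U₁ h)

end gcdMinors

/-- if the columns of `B` form a basis of the lattice
`L_N(A) = {x ∈ ℤ^n : Ax = 0}`, then its determinant (the square root of the Gram determinant
of `B`) equals `det(A Aᵀ)^{1/2} / gcd(A)`. -/
theorem det_nullspace_lattice (m n : ℕ) (hmn : m ≤ n)
    (A : Matrix (Fin m) (Fin n) ℤ)
    (hA : LinearIndependent ℚ (fun i : Fin m => fun j : Fin n => (A i j : ℚ)))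
    (B : Matrix (Fin n) (Fin (n - m)) ℤ)
    (hBnull : ∀ j, A.mulVec (fun i => B i j) = 0)
    (hBindep : LinearIndependent ℚ (fun j : Fin (n - m) => fun i : Fin n => (B i j : ℚ)))
    (hBspan : ∀ x : Fin n → ℤ, A.mulVec x = 0 → ∃ c : Fin (n - m) → ℤ, x = B.mulVec c) :
    Real.sqrt (((B.transpose * B).det : ℝ)) =
      Real.sqrt (((A * A.transpose).det : ℝ)) / gcdMinors m n A := by
  have hAB : A * B = 0 := by
    ext i j
    exact congrFun (hBnull j) i
  have hcard : Fintype.card (Fin m) + Fintype.card (Fin (n - m)) = Fintype.card (Fin n) := by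
    simp only [Fintype.card_fin]
    omega
  have hBcol : LinearIndependent ℤ B.col :=
    .of_comp ((Int.castAddHom ℚ).toIntLinearMap.compLeft (Fin n)) (hBindep.restrict_scalars' ℤ)
  obtain ⟨W, U, hWBU⟩ := exists_fromCols_mul_eq_one A B hAB hBcol hBspan hcard
  have hgramA : (A * Aᵀ).det ≠ 0 :=
    det_mul_transpose_ne_zero_of_map (Int.castRingHom ℚ) (Int.castRingHom ℚ).injective_int hA
  have hgramB : (Bᵀ * B).det ≠ 0 := by
    simpa only [transpose_transpose] using
      det_mul_transpose_ne_zero_of_map (M := Bᵀ) (Int.castRingHom ℚ)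
        (Int.castRingHom ℚ).injective_int hBindep
  have hdet : (A * Aᵀ).det = (gcdMinors m n A : ℤ) ^ 2 * (Bᵀ * B).det := by
    rw [gcdMinors_eq_natAbs_det_mul A W _ (mul_mul_toRows₁_of_fromCols_mul_eq_one A B W U hAB hWBU),
      Int.natCast_natAbs, sq_abs]
    exact det_mul_transpose_eq_sq_mul A B W U hAB hWBU hcard hgramB
  have hgcd : (gcdMinors m n A : ℝ) ≠ 0 := by
    intro hzero
    exact hgramA (by rw [hdet, Nat.cast_eq_zero.mp hzero]; simp)
  rw [show ((A * Aᵀ).det : ℝ) = (gcdMinors m n A : ℝ) ^ 2 * (Bᵀ * B).det by exact_mod_cast hdet,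
    Real.sqrt_mul (by positivity), Real.sqrt_sq (by positivity), mul_div_cancel_left₀ _ hgcd]
end
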